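/- arXiv:2302.09687 — 2 statements merged into one kernel-verified Lean document; each statement's English description precedes it below -/
import Mathlib

section
/- The block circulant operator is multiplicative: for tensors A ∈ ℂ^{n×m×p} and B ∈ ℂ^{m×s×p}, bcirc(A * B) = bcirc(A) · bcirc(B), where A * B = fold(bcirc(A) · unfold(B)) is the t-product. -/
/-- The block circulant matrix of a third-order tensor given by its frontal faces. -/
def bcirc {n m p : ℕ} (A : Fin p → Matrix (Fin n) (Fin m) ℂ) :
    Matrix (Fin p × Fin n) (Fin p × Fin m) ℂ :=
  fun ai bj => A (ai.1 - bj.1) ai.2 bj.2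

/-- `unfold` stacks the frontal faces of a tensor vertically into a block column. -/
def unfold {m s p : ℕ} (B : Fin p → Matrix (Fin m) (Fin s) ℂ) :
    Matrix (Fin p × Fin m) (Fin s) ℂ :=
  fun ki j => B ki.1 ki.2 j

/-- `fold` is the inverse of `unfold`. -/
def fold {n s p : ℕ} (M : Matrix (Fin p × Fin n) (Fin s) ℂ) :
    Fin p → Matrix (Fin n) (Fin s) ℂ :=
  fun k i j => M (k, i) j

/-- The tensor t-product `A * B := fold (bcirc A · unfold B)`. -/
noncomputable def tProd {n m s p : ℕ} (A : Fin p → Matrix (Fin n) (Fin m) ℂ)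
    (B : Fin p → Matrix (Fin m) (Fin s) ℂ) : Fin p → Matrix (Fin n) (Fin s) ℂ :=
  fold (bcirc A * unfold B)

/-- The block circulant operator is multiplicative with respect to the t-product:
`bcirc (A * B) = bcirc A · bcirc B`. -/
theorem bcirc_tprod {n m s p : ℕ} (A : Fin p → Matrix (Fin n) (Fin m) ℂ)
    (B : Fin p → Matrix (Fin m) (Fin s) ℂ) :
    bcirc (tProd A B) = bcirc A * bcirc B := by
  match p with
  | 0 => ext ⟨k, i⟩; exact k.elim0
  | q + 1 =>
    ext ⟨k, i⟩ ⟨l, j⟩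
    simp only [bcirc, tProd, fold, unfold, Matrix.mul_apply, Fintype.sum_prod_type]
    refine Fintype.sum_equiv (Equiv.addRight l) _ _ fun c => ?_
    simp only [Equiv.coe_addRight, add_sub_cancel_right]
    simp only [sub_sub, add_comm l c]
end

section
/- For block upper triangular 2×2 block matrices with both diagonal blocks equal to A, the top-right block of f of the block matrix is the Fréchet derivative: for f a polynomial (or analytic function on a region containing spec(A)), f([[A, C],[0, A]]) = [[f(A), L_f(A,C)],[0, f(A)]]. -/
open Matrix

/-- The Fréchet derivative of the (polynomial) matrix function `f(z) = Σ aₖ zᵏ`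
at `A` in direction `C`: `L_f(A,C) = Σ_{k≥1} aₖ Σ_{j=1}^{k} A^{j-1} C A^{k-j}`. -/
noncomputable def Lmat {α : Type*} [Fintype α] [DecidableEq α] (f : Polynomial ℂ)
    (A C : Matrix α α ℂ) : Matrix α α ℂ :=
  ∑ k ∈ Finset.range (f.natDegree + 1), f.coeff k •
    ∑ j ∈ Finset.range k, A ^ j * C * A ^ (k - 1 - j)

lemma pow_fromBlocks {m : ℕ} (A C : Matrix (Fin m) (Fin m) ℂ) (k : ℕ) :
    (Matrix.fromBlocks A C 0 A) ^ k =
      Matrix.fromBlocks (A ^ k) (∑ j ∈ Finset.range k, A ^ j * C * A ^ (k - 1 - j)) 0 (A ^ k) := by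
  induction k with
  | zero => simp [Matrix.fromBlocks_one]
  | succ k ih =>
    have htr : A ^ k * C + (∑ j ∈ Finset.range k, A ^ j * C * A ^ (k - 1 - j)) * A =
        ∑ j ∈ Finset.range (k + 1), A ^ j * C * A ^ (k + 1 - 1 - j) := by
      rw [Finset.sum_range_succ, Finset.sum_mul, add_comm]
      have h1 : (∑ j ∈ Finset.range k, A ^ j * C * A ^ (k - 1 - j) * A) =
          ∑ j ∈ Finset.range k, A ^ j * C * A ^ (k + 1 - 1 - j) := by
        refine Finset.sum_congr rfl fun j hj => ?_
        rw [Finset.mem_range] at hj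
        rw [mul_assoc (A ^ j * C), ← pow_succ]
        congr 2
        omega
      have h2 : A ^ k * C = A ^ k * C * A ^ (k + 1 - 1 - k) := by
        rw [show k + 1 - 1 - k = 0 from by omega, pow_zero, mul_one]
      rw [h1, ← h2]
    rw [pow_succ, ih, Matrix.fromBlocks_multiply]
    simp only [mul_zero, zero_mul, add_zero, zero_add]
    rw [← pow_succ, htr]

/-- `f([[A, C],[0, A]]) = [[f(A), L_f(A,C)],[0, f(A)]]`: the top-right block of `f`
applied to the 2×2 block upper triangular matrix with diagonal blocks `A` is the
Fréchet derivative `L_f(A,C)`. -/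
theorem aeval_fromBlocks_frechet {m : ℕ} (f : Polynomial ℂ)
    (A C : Matrix (Fin m) (Fin m) ℂ) :
    Polynomial.aeval (Matrix.fromBlocks A C 0 A) f =
      Matrix.fromBlocks (Polynomial.aeval A f) (Lmat f A C) 0 (Polynomial.aeval A f) := by
  rw [Polynomial.aeval_eq_sum_range (p := f) (Matrix.fromBlocks A C 0 A),
    Polynomial.aeval_eq_sum_range (p := f) A, Lmat]
  simp only [pow_fromBlocks]
  ext i j
  rcases i with i | i <;> rcases j with j | j <;>
    simp [Matrix.fromBlocks, Finset.sum_apply, Matrix.smul_apply, Matrix.sum_apply]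
end
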